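/- Let n ≥ 1, let B = B₁ = {(z,t) ∈ ℍⁿ : |z| ≤ 1, |t| ≤ 1}, let k ∈ ℕ and λ > 0, and set ν = 4k+2n. Then the radial Fourier coefficient of the indicator function of B satisfies χ̂_B(λ,k) = r_k · (sin λ / λ^{n+1}) · (2ν)^{(n+1)/2} · ∫₀^{λ/(2ν)} Λ_k^{n−1}(νt) t^{(n−1)/2} dt. -/

import Mathlib

open MeasureTheory Complex

noncomputable section

/-- The generalized Laguerre polynomials
`L_k^δ(t) = t^{−δ} e^t (1/k!) (d/dt)^k (e^{−t} t^{k+δ})`. -/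
def genLaguerre (k : ℕ) (δ : ℝ) (t : ℝ) : ℝ :=
  t ^ (-δ) * Real.exp t * ((k.factorial : ℝ))⁻¹ *
    iteratedDeriv k (fun s => Real.exp (-s) * s ^ ((k : ℝ) + δ)) t

/-- The normalizing constant `r_k = (k!/(n+k−1)!)^{1/2}`. -/
def rk (n k : ℕ) : ℝ := Real.sqrt ((k.factorial : ℝ) / ((n + k - 1).factorial : ℝ))

/-- The Laguerre functions `Λ_k^{n−1}(t) = r_k L_k^{n−1}(t) e^{−t/2} t^{(n−1)/2}`. -/
def lagFun (n k : ℕ) (t : ℝ) : ℝ :=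
  rk n k * genLaguerre k ((n : ℝ) - 1) t * Real.exp (-t / 2) * t ^ (((n : ℝ) - 1) / 2)

/-- The radial Fourier coefficient
`f̂(λ,k) = r_k ∫₀^∞ f_#^λ(r) (|λ|r²)^{(1−n)/2} Λ_k^{n−1}(|λ|r²/2) r^{2n−1} dr`,
where `f_#^λ(r) = ∫_ℝ f_#(r,t) e^{iλt} dt`. -/
def radialCoeff (n : ℕ) (fsharp : ℝ → ℝ → ℂ) (lam : ℝ) (k : ℕ) : ℂ :=
  (rk n k : ℂ) * ∫ r in Set.Ioi (0 : ℝ),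
    (∫ t : ℝ, fsharp r t * Complex.exp (Complex.I * (lam : ℂ) * (t : ℂ))) *
      (((|lam| * r ^ 2) ^ ((1 - (n : ℝ)) / 2) : ℝ) : ℂ) *
      ((lagFun n k (|lam| * r ^ 2 / 2) : ℝ) : ℂ) *
      ((r ^ (2 * (n : ℝ) - 1) : ℝ) : ℂ)

/-! For `|t| ≤ 1` the `t`-integral is `∫₋₁¹ e^{iλt} dt = 2 sin λ / λ`, so `χ̂_B(λ,k)` factors as
`r_k (2 sin λ / λ)` times a radial integral over `(0,1]`. The substitutions `r = √s` and then
`s = (2ν/λ) t` turn the argument `λr²/2` of `Λ_k^{n−1}` into `νt` and collect all the powers of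
`r` into `t^{(n−1)/2}`, with the constant `(2ν)^{(n+1)/2} / (2λⁿ)`. -/

theorem integral_ite_abs_le_one_mul_exp {lam : ℝ} (hlam : lam ≠ 0) :
    ∫ t : ℝ, (if |t| ≤ 1 then (1 : ℂ) else 0) * exp (I * lam * t) = 2 * Real.sin lam / lam := by
  have hind : (fun t : ℝ => (if |t| ≤ 1 then (1 : ℂ) else 0) * exp (I * lam * t)) =
      Set.indicator (Set.Icc (-1) 1) fun t : ℝ => exp ((lam * t : ℝ) * I) := by
    ext t
    simp only [Set.indicator_apply, Set.mem_Icc, ← abs_le]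
    split_ifs <;> push_cast <;> ring_nf
  rw [hind, integral_indicator measurableSet_Icc, integral_Icc_eq_integral_Ioc,
    ← intervalIntegral.integral_of_le (by norm_num),
    intervalIntegral.integral_comp_mul_left (fun u : ℝ => exp (u * I)) hlam, mul_neg, mul_one,
    integral_exp_mul_I_eq_sin]
  simp [div_eq_inv_mul, mul_comm]

theorem integral_Ioc_zero_eq_integral_comp_sqrt {E : Type*} [NormedAddCommGroup E]
    [NormedSpace ℝ E] (g : ℝ → E) {b : ℝ} (hb : 0 ≤ b) :
    ∫ r in Set.Ioc 0 b, g r = ∫ s in Set.Ioc 0 (b ^ 2), (2 * √s)⁻¹ • g √s := by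
  have himage : Real.sqrt '' Set.Ioc 0 (b ^ 2) = Set.Ioc 0 b := by
    ext r
    constructor
    · rintro ⟨s, ⟨hs0, hsb⟩, rfl⟩
      exact ⟨Real.sqrt_pos.2 hs0, Real.sqrt_le_iff.2 ⟨hb, hsb⟩⟩
    · rintro ⟨hr0, hrb⟩
      exact ⟨r ^ 2, ⟨by positivity, by gcongr⟩, Real.sqrt_sq hr0.le⟩
  have hderiv : ∀ s ∈ Set.Ioc (0 : ℝ) (b ^ 2),
      HasDerivWithinAt Real.sqrt (2 * √s)⁻¹ (Set.Ioc 0 (b ^ 2)) s := fun s hs => by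
    simpa [one_div] using (Real.hasDerivAt_sqrt hs.1.ne').hasDerivWithinAt
  have hinj : Set.InjOn Real.sqrt (Set.Ioc 0 (b ^ 2)) := fun s hs u hu h =>
    (Real.sqrt_inj hs.1.le hu.1.le).1 h
  rw [← himage, integral_image_eq_integral_abs_deriv_smul measurableSet_Ioc hderiv hinj]
  refine setIntegral_congr_fun measurableSet_Ioc fun s _ => ?_
  rw [abs_of_nonneg (by positivity)]

theorem integral_mul_rpow_eq_rpow_mul_integral_comp_mul (f : ℝ → ℝ) {b c : ℝ} (hb : 0 ≤ b)
    (hc : 0 < c) (q : ℝ) :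
    ∫ s in (0 : ℝ)..b, f s * s ^ q = c ^ (q + 1) * ∫ t in (0 : ℝ)..b / c, f (c * t) * t ^ q := by
  have hscale : ∫ t in (0 : ℝ)..b / c, f (c * t) * (c * t) ^ q =
      c ^ q * ∫ t in (0 : ℝ)..b / c, f (c * t) * t ^ q := by
    rw [← intervalIntegral.integral_const_mul]
    refine intervalIntegral.integral_congr fun t ht => ?_
    rw [Set.uIcc_of_le (by positivity)] at ht
    rw [Real.mul_rpow hc.le ht.1]
    ring
  rw [Real.rpow_add_one hc.ne', mul_comm _ c, mul_assoc, ← hscale,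
    intervalIntegral.integral_comp_mul_left (fun s => f s * s ^ q) hc.ne', smul_eq_mul,
    mul_inv_cancel_left₀ hc.ne', mul_zero, mul_div_cancel₀ _ hc.ne']

theorem inv_two_sqrt_mul_radial_weight {lam s : ℝ} (hlam : 0 < lam) (hs : 0 < s) (p x : ℝ) :
    (2 * √s)⁻¹ * ((lam * √s ^ 2) ^ ((1 - p) / 2) * x * √s ^ (2 * p - 1)) =
      lam ^ ((1 - p) / 2) / 2 * (x * s ^ ((p - 1) / 2)) := by
  rw [Real.sq_sqrt hs.le, Real.mul_rpow hlam.le hs.le, Real.sqrt_eq_rpow, ← Real.rpow_mul hs.le]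
  have hexp : s ^ ((1 - p) / 2) * s ^ (1 / 2 * (2 * p - 1)) =
      s ^ ((p - 1) / 2) * s ^ (1 / 2 : ℝ) := by
    rw [← Real.rpow_add hs, ← Real.rpow_add hs]
    ring_nf
  have hsqrt : 0 < s ^ (1 / 2 : ℝ) := Real.rpow_pos_of_pos hs _
  rw [show ∀ a b c d : ℝ, a * b * c * d = a * c * (b * d) by intros; ring, hexp]
  field_simp

theorem integral_radial_weight_eq (F : ℝ → ℝ) {lam ν : ℝ} (hlam : 0 < lam) (hν : 0 < ν)
    (p : ℝ) :
    ∫ r in Set.Ioc 0 1, (lam * r ^ 2) ^ ((1 - p) / 2) * F (lam * r ^ 2 / 2) * r ^ (2 * p - 1) =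
      (2 * ν) ^ ((p + 1) / 2) / (2 * lam ^ p) *
        ∫ t in (0 : ℝ)..lam / (2 * ν), F (ν * t) * t ^ ((p - 1) / 2) := by
  have hc : 0 < 2 * ν / lam := by positivity
  have hF : ∀ t, F (lam * (2 * ν / lam * t) / 2) = F (ν * t) := fun t => by
    congr 1
    field_simp
  rw [integral_Ioc_zero_eq_integral_comp_sqrt _ zero_le_one, one_pow,
    setIntegral_congr_fun measurableSet_Ioc fun s hs =>
      (by rw [smul_eq_mul, inv_two_sqrt_mul_radial_weight hlam hs.1, Real.sq_sqrt hs.1.le]),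
    integral_const_mul, ← intervalIntegral.integral_of_le zero_le_one,
    integral_mul_rpow_eq_rpow_mul_integral_comp_mul _ zero_le_one hc, one_div_div]
  simp only [hF]
  rw [Real.div_rpow (by positivity) hlam.le, ← mul_assoc]
  congr 1
  have hexp : lam ^ ((p + 1) / 2) = lam ^ ((1 - p) / 2) * lam ^ p := by
    rw [← Real.rpow_add hlam]
    ring_nf
  have hpow : 0 < lam ^ ((1 - p) / 2) := Real.rpow_pos_of_pos hlam _
  rw [show (p - 1) / 2 + 1 = (p + 1) / 2 by ring, hexp]
  field_simp

theorem radialCoeff_ite_le_one (n k : ℕ) (ψ : ℝ → ℂ) (lam : ℝ) :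
    radialCoeff n (fun r t => if r ≤ 1 then ψ t else 0) lam k =
      rk n k * (∫ t : ℝ, ψ t * exp (I * lam * t)) *
        ((∫ r in Set.Ioc 0 1, (|lam| * r ^ 2) ^ ((1 - (n : ℝ)) / 2) *
          lagFun n k (|lam| * r ^ 2 / 2) * r ^ (2 * (n : ℝ) - 1) : ℝ) : ℂ) := by
  have hinner : ∀ r : ℝ, ∫ t : ℝ, (if r ≤ 1 then ψ t else 0) * exp (I * lam * t) =
      if r ≤ 1 then ∫ t : ℝ, ψ t * exp (I * lam * t) else 0 := fun r => by
    split_ifs <;> simp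
  simp only [radialCoeff, hinner]
  rw [mul_assoc]
  congr 1
  rw [← integral_complex_ofReal, ← integral_const_mul, ← Set.Ioi_inter_Iic,
    ← setIntegral_indicator measurableSet_Iic]
  refine setIntegral_congr_fun measurableSet_Ioi fun r _ => ?_
  simp only [Set.indicator_apply, Set.mem_Iic]
  split_ifs <;> push_cast <;> ring

/-- The radial Fourier coefficient of the indicator of
`B = {(z,t) : |z| ≤ 1, |t| ≤ 1}` (whose radial profile is
`χ_{[0,1]}(r)·χ_{[−1,1]}(t)`) satisfies, for `λ > 0` and `ν = 4k+2n`,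
`χ̂_B(λ,k) = r_k (sin λ/λ^{n+1}) (2ν)^{(n+1)/2} ∫₀^{λ/(2ν)} Λ_k^{n−1}(νt) t^{(n−1)/2} dt`. -/
theorem radialCoeff_indicator_box
    (n : ℕ) (hn : 1 ≤ n) (k : ℕ) (lam : ℝ) (hlam : 0 < lam) :
    radialCoeff n (fun r t => if r ≤ 1 ∧ |t| ≤ 1 then (1 : ℂ) else 0) lam k =
      ((rk n k * (Real.sin lam / lam ^ (n + 1)) *
            (2 * ((4 * k + 2 * n : ℕ) : ℝ)) ^ (((n : ℝ) + 1) / 2) *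
            ∫ t in (0 : ℝ)..(lam / (2 * ((4 * k + 2 * n : ℕ) : ℝ))),
              lagFun n k (((4 * k + 2 * n : ℕ) : ℝ) * t) * t ^ (((n : ℝ) - 1) / 2) : ℝ) : ℂ) := by
  have hν : (0 : ℝ) < ((4 * k + 2 * n : ℕ) : ℝ) := Nat.cast_pos.2 (by omega)
  have hprofile : (fun r t : ℝ => if r ≤ 1 ∧ |t| ≤ 1 then (1 : ℂ) else 0) =
      fun r t => if r ≤ 1 then (if |t| ≤ 1 then 1 else 0) else 0 := by
    ext r t
    exact ite_and _ _ _ _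
  rw [hprofile, radialCoeff_ite_le_one, integral_ite_abs_le_one_mul_exp hlam.ne',
    abs_of_pos hlam, integral_radial_weight_eq _ hlam hν, Real.rpow_natCast]
  push_cast
  field_simp
  ring
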